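/- arXiv:2411.12725 — 3 statements merged into one kernel-verified Lean document; each statement's English description precedes it below -/
import Mathlib

section
/- For a finite game and q = 0, a strategy profile π* satisfies the variational inequality ⟨v^0(π*), π − π*⟩ ≤ 0 for all mixed strategy profiles π if and only if π* is a Nash equilibrium. -/
open Finset

variable {N : Type*} [Fintype N] [DecidableEq N]
variable {A : N → Type*} [∀ i, Fintype (A i)] [∀ i, DecidableEq (A i)]

/-- `p` is a mixed strategy (a point of the simplex) over a finite action set. -/
def IsMixed {α : Type*} [Fintype α] (p : α → ℝ) : Prop :=
  (∀ a, 0 ≤ p a) ∧ ∑ a, p a = 1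

/-- A mixed strategy profile: one mixed strategy per player. -/
def IsProfile {N : Type*} [Fintype N] {A : N → Type*} [∀ i, Fintype (A i)]
    (π : ∀ i, A i → ℝ) : Prop := ∀ i, IsMixed (π i)

/-- The pure strategy playing action `α` with probability one. -/
def pureStrat {α : Type*} [DecidableEq α] (a : α) : α → ℝ :=
  fun b => if b = a then 1 else 0

/-- Expected utility of reward function `R` under the mixed profile `π`,
where players randomise independently. -/
def expUtil (R : (∀ i, A i) → ℝ) (π : ∀ i, A i → ℝ) : ℝ :=
  ∑ a : ∀ i, A i, (∏ i, π i (a i)) * R a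

/-- Unilateral deviation of player `i` to the mixed strategy `p`. -/
def dev (π : ∀ i, A i → ℝ) (i : N) (p : A i → ℝ) : ∀ j, A j → ℝ :=
  Function.update π i p

/-- Nash equilibrium: no profitable unilateral mixed deviation. -/
def IsNash (R : N → (∀ i, A i) → ℝ) (π : ∀ i, A i → ℝ) : Prop :=
  IsProfile π ∧ ∀ i (p : A i → ℝ), IsMixed p →
    expUtil (R i) (dev π i p) ≤ expUtil (R i) π

/-- Strict Nash equilibrium: every unilateral deviation to a different mixed
strategy strictly decreases the deviator's utility. -/
def IsStrictNash (R : N → (∀ i, A i) → ℝ) (π : ∀ i, A i → ℝ) : Prop :=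
  IsProfile π ∧ ∀ i (p : A i → ℝ), IsMixed p → p ≠ π i →
    expUtil (R i) (dev π i p) < expUtil (R i) π

/-- The `0`-gradient of player `i` at profile `π`: the payoff of the pure
strategy `α` against `π₋ᵢ` minus the unweighted average of pure payoffs. -/
noncomputable def grad0 (R : N → (∀ i, A i) → ℝ) (π : ∀ i, A i → ℝ)
    (i : N) (α : A i) : ℝ :=
  expUtil (R i) (dev π i (pureStrat α)) -
    (∑ β, expUtil (R i) (dev π i (pureStrat β))) / (Fintype.card (A i))


lemma expUtil_dev_eq {N : Type*} [Fintype N] [DecidableEq N]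
    {A : N → Type*} [∀ i, Fintype (A i)] [∀ i, DecidableEq (A i)]
    (R : (∀ i, A i) → ℝ) (π : ∀ i, A i → ℝ) (i : N) (p : A i → ℝ) :
    expUtil R (dev π i p) =
      ∑ a : ∀ j, A j, p (a i) * ((∏ j ∈ univ.erase i, π j (a j)) * R a) := by
  unfold expUtil dev
  refine Finset.sum_congr rfl fun a _ => ?_
  rw [← Finset.mul_prod_erase univ _ (mem_univ i), Function.update_self, mul_assoc]
  congr 2
  refine Finset.prod_congr rfl fun j hj => ?_
  rw [Function.update_of_ne (Finset.ne_of_mem_erase hj)]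

lemma expUtil_dev_linear {N : Type*} [Fintype N] [DecidableEq N]
    {A : N → Type*} [∀ i, Fintype (A i)] [∀ i, DecidableEq (A i)]
    (R : (∀ i, A i) → ℝ) (π : ∀ i, A i → ℝ) (i : N) (p : A i → ℝ) :
    expUtil R (dev π i p) = ∑ α, p α * expUtil R (dev π i (pureStrat α)) := by
  simp only [expUtil_dev_eq, pureStrat, Finset.mul_sum]
  rw [Finset.sum_comm]
  refine Finset.sum_congr rfl fun a _ => ?_
  simp only [ite_mul, one_mul, zero_mul, mul_ite, mul_zero]
  rw [Finset.sum_ite_eq univ (a i) (fun α => p α * ((∏ j ∈ univ.erase i, π j (a j)) * R a))]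
  simp

lemma inner_sum_eq {N : Type*} [Fintype N] [DecidableEq N]
    {A : N → Type*} [∀ i, Fintype (A i)] [∀ i, DecidableEq (A i)]
    (R : N → (∀ i, A i) → ℝ) (πs : ∀ i, A i → ℝ) (hπs : IsProfile πs)
    (i : N) (p : A i → ℝ) (hp : IsMixed p) :
    ∑ α, grad0 R πs i α * (p α - πs i α) =
      expUtil (R i) (dev πs i p) - expUtil (R i) πs := by
  set E := fun α => expUtil (R i) (dev πs i (pureStrat α)) with hE
  set c := (∑ β, E β) / (Fintype.card (A i)) with hc
  have h1 : ∑ α, grad0 R πs i α * (p α - πs i α)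
      = (∑ α, (p α * E α - πs i α * E α)) - c * (∑ α, (p α - πs i α)) := by
    rw [Finset.mul_sum, ← Finset.sum_sub_distrib]
    refine Finset.sum_congr rfl fun α _ => ?_
    simp only [grad0, ← hE, ← hc]
    ring
  have h2 : (∑ α, (p α - πs i α)) = 0 := by
    rw [Finset.sum_sub_distrib, hp.2, (hπs i).2, sub_self]
  have h3 : dev πs i (πs i) = πs := Function.update_eq_self i πs
  rw [h1, h2, mul_zero, sub_zero, Finset.sum_sub_distrib,
    ← expUtil_dev_linear, ← expUtil_dev_linear, h3]

/-- for `q = 0`, the variational inequality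
`⟨v⁰(π*), π − π*⟩ ≤ 0` for all mixed profiles `π` holds iff `π*` is a Nash
equilibrium. -/
theorem grad0_varIneq_iff_nash (R : N → (∀ i, A i) → ℝ)
    (πs : ∀ i, A i → ℝ) (hπs : IsProfile πs) :
    (∀ π : ∀ i, A i → ℝ, IsProfile π →
        ∑ i, ∑ α, grad0 R πs i α * (π i α - πs i α) ≤ 0) ↔
      IsNash R πs := by
  constructor
  · intro hVI
    refine ⟨hπs, fun i p hp => ?_⟩
    have hprof : IsProfile (dev πs i p) := by
      intro j
      by_cases hj : j = i
      · subst hj; simpa [dev] using hp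
      · simpa [dev, Function.update_of_ne hj] using hπs j
    have h := hVI (dev πs i p) hprof
    have hzero : ∀ j ∈ univ, j ≠ i →
        ∑ α, grad0 R πs j α * ((dev πs i p) j α - πs j α) = 0 := by
      intro j _ hj
      simp [dev, Function.update_of_ne hj]
    rw [Finset.sum_eq_single i (fun j hj hji => hzero j hj hji) (by simp)] at h
    simp only [dev, Function.update_self] at h
    rw [inner_sum_eq R πs hπs i p hp] at h
    linarith
  · intro hN π hπ
    refine Finset.sum_nonpos fun i _ => ?_
    rw [inner_sum_eq R πs hπs i (π i) (hπ i)]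
    linarith [hN.2 i (π i) (hπ i)]
end

section
/- For a finite game and q > 0, a strategy profile π* satisfies ⟨v^q(π*), π − π*⟩ ≤ 0 for all mixed strategy profiles π if and only if for every player i and every action α in the support of π*_i, u_i(e_α, π*_{-i}) = u_i(π*). -/
/-!
Fix a player `i` and write `g = v^q_i(π*)`. Since `q > 0`, `g` vanishes off the support of `π*_i`,
and `∑_β g_β = 0` because `M_i` is the `π*_i^q`-weighted mean of the pure payoffs. A unilateral
deviation of `i` to a pure action `β` turns the variational inequality into `g_β ≤ ⟨g, π*_i⟩`;
so `g` is maximal on the support of `π*_i`, hence constant there, and then `g = 0`. Conversely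
`g = 0` makes the inequality trivial. Finally `g = 0` says exactly that every supported action
earns `M_i`, and then `u_i(π*) = ∑_α π*_{i,α} u_i(e_α, π*_{-i}) = M_i`.
-/

open Finset

variable {N : Type*} [Fintype N] [DecidableEq N]
variable {A : N → Type*} [∀ i, Fintype (A i)] [∀ i, DecidableEq (A i)]

/-- The `q`-gradient of player `i`'s expected utility at the profile `π`
(component for action `α`), with real exponentiation `x ^ q` (`Real.rpow`). -/
noncomputable def qGrad (q : ℝ) (R : N → (∀ i, A i) → ℝ)
    (π : ∀ i, A i → ℝ) (i : N) (α : A i) : ℝ :=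
  (π i α) ^ q *
    (expUtil (R i) (dev π i (pureStrat α)) -
      (∑ β, (π i β) ^ q * expUtil (R i) (dev π i (pureStrat β))) /
        (∑ β, (π i β) ^ q))

lemma isMixed_pureStrat {α : Type*} [Fintype α] [DecidableEq α] (a : α) :
    IsMixed (pureStrat a) :=
  ⟨fun b => by unfold pureStrat; split_ifs <;> norm_num, by simp [pureStrat]⟩

lemma IsMixed.exists_pos {α : Type*} [Fintype α] {p : α → ℝ} (hp : IsMixed p) :
    ∃ a, 0 < p a := by
  by_contra! h
  linarith [hp.2, sum_nonpos (s := univ) fun a _ => h a]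

lemma IsMixed.sum_rpow_pos {α : Type*} [Fintype α] {p : α → ℝ} (hp : IsMixed p)
    {q : ℝ} : 0 < ∑ a, p a ^ q := by
  obtain ⟨a, ha⟩ := hp.exists_pos
  exact sum_pos' (fun b _ => Real.rpow_nonneg (hp.1 b) q)
    ⟨a, mem_univ a, Real.rpow_pos_of_pos ha q⟩

omit [∀ i, DecidableEq (A i)] in
lemma isProfile_dev {π : ∀ i, A i → ℝ} (hπ : IsProfile π) (i : N) {p : A i → ℝ}
    (hp : IsMixed p) : IsProfile (dev π i p) := by
  intro j
  rcases eq_or_ne j i with rfl | hj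
  · simpa [dev] using hp
  · simpa [dev, Function.update_of_ne hj] using hπ j

lemma sum_mul_eq_sum_mul_of_eq_on_support {ι : Type*} [Fintype ι] {w f : ι → ℝ} {c : ℝ}
    (h : ∀ a, w a ≠ 0 → f a = c) : ∑ a, w a * f a = (∑ a, w a) * c := by
  rw [sum_mul]
  refine sum_congr rfl fun a _ => ?_
  by_cases ha : w a = 0
  · simp [ha]
  · rw [h a ha]

lemma eq_zero_of_le_sum_mul_of_sum_eq_zero {ι : Type*} [Fintype ι] {p g : ι → ℝ}
    (hp : IsMixed p) (hsupp : ∀ a, p a = 0 → g a = 0) (hsum : ∑ a, g a = 0)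
    (hle : ∀ a, g a ≤ ∑ b, p b * g b) (a : ι) : g a = 0 := by
  obtain ⟨c, hc⟩ : ∃ c, c = ∑ b, p b * g b := ⟨_, rfl⟩
  rw [← hc] at hle
  have hgap : ∑ b, p b * (c - g b) = 0 := by
    simp only [mul_sub, sum_sub_distrib, ← sum_mul, hp.2, one_mul, hc, sub_self]
  -- `g` vanishes off the support of `p` and equals `c` on it, so `∑ g² = c ∑ g = 0`.
  have hgc : ∀ b, g b * (g b - c) = 0 := by
    intro b
    rcases mul_eq_zero.1 ((sum_eq_zero_iff_of_nonneg fun b _ =>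
        mul_nonneg (hp.1 b) (sub_nonneg.2 (hle b))).1 hgap b (mem_univ b)) with h | h
    · simp [hsupp b h]
    · simp [sub_eq_zero.1 h]
  have hsq : ∑ b, g b ^ 2 = 0 := by
    calc ∑ b, g b ^ 2 = ∑ b, g b * c := sum_congr rfl fun b _ => by linear_combination hgc b
      _ = 0 := by rw [← sum_mul, hsum, zero_mul]
  exact pow_eq_zero_iff two_ne_zero |>.1 <|
    (sum_eq_zero_iff_of_nonneg fun b _ => sq_nonneg (g b)).1 hsq a (mem_univ a)

lemma sum_mul_pureStrat_sub {α : Type*} [Fintype α] [DecidableEq α] (g p : α → ℝ) (a : α) :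
    ∑ b, g b * (pureStrat a b - p b) = g a - ∑ b, p b * g b := by
  simp [pureStrat, mul_sub, sum_sub_distrib, mul_comm]

omit [∀ i, DecidableEq (A i)] in
lemma sum_sum_mul_dev_sub (g π : ∀ i, A i → ℝ) (i : N) (p : A i → ℝ) :
    ∑ j, ∑ α, g j α * (dev π i p j α - π j α) = ∑ α, g i α * (p α - π i α) := by
  rw [sum_eq_single i]
  · simp [dev]
  · intro j _ hj
    simp [dev, Function.update_of_ne hj]
  · simp

omit [∀ i, Fintype (A i)] [∀ i, DecidableEq (A i)] in
lemma prod_dev_apply (π : ∀ i, A i → ℝ) (i : N) (p : A i → ℝ) (a : ∀ i, A i) :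
    ∏ j, dev π i p j (a j) = p (a i) * ∏ j ∈ univ.erase i, π j (a j) := by
  rw [← mul_prod_erase univ _ (mem_univ i)]
  congr 1
  · simp [dev]
  · exact prod_congr rfl fun j hj => by simp [dev, Function.update_of_ne (ne_of_mem_erase hj)]

lemma expUtil_eq_sum_mul_expUtil_dev_pureStrat (R : (∀ i, A i) → ℝ) (π : ∀ i, A i → ℝ)
    (i : N) : expUtil R π = ∑ α, π i α * expUtil R (dev π i (pureStrat α)) := by
  simp only [expUtil, prod_dev_apply, mul_sum]
  rw [sum_comm]
  refine sum_congr rfl fun a _ => ?_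
  rw [← mul_prod_erase univ (fun j => π j (a j)) (mem_univ i)]
  simp [pureStrat, mul_assoc]

section qGrad

variable {q : ℝ} (R : N → (∀ i, A i) → ℝ) {π : ∀ i, A i → ℝ} {i : N}

lemma qGrad_eq_zero_of_eq_zero (hq : 0 < q) {α : A i} (h : π i α = 0) :
    qGrad q R π i α = 0 := by
  rw [qGrad, h, Real.zero_rpow hq.ne', zero_mul]

lemma sum_qGrad_eq_zero (hπ : IsMixed (π i)) : ∑ α, qGrad q R π i α = 0 := by
  have hS := hπ.sum_rpow_pos (q := q)
  simp only [qGrad, mul_sub, sum_sub_distrib, ← sum_mul]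
  field_simp
  ring

lemma qGrad_eq_zero_iff (hq : 0 < q) (hπ : IsMixed (π i)) :
    (∀ α, qGrad q R π i α = 0) ↔
      ∀ α, 0 < π i α → expUtil (R i) (dev π i (pureStrat α)) = expUtil (R i) π := by
  have hS := (hπ.sum_rpow_pos (q := q)).ne'
  have hsupp : ∀ α, π i α ^ q ≠ 0 → 0 < π i α := fun α h =>
    (hπ.1 α).lt_of_ne' fun h0 => h (by rw [h0, Real.zero_rpow hq.ne'])
  set M := (∑ β, π i β ^ q * expUtil (R i) (dev π i (pureStrat β))) / ∑ β, π i β ^ q with hMdef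
  constructor
  · intro h
    have hM : ∀ α, π i α ^ q ≠ 0 → expUtil (R i) (dev π i (pureStrat α)) = M := fun α hα =>
      sub_eq_zero.1 <| (mul_eq_zero.1 (h α)).resolve_left hα
    have hE : expUtil (R i) π = M := by
      rw [expUtil_eq_sum_mul_expUtil_dev_pureStrat _ _ i,
        sum_mul_eq_sum_mul_of_eq_on_support fun α hα => hM α ?_, hπ.2, one_mul]
      exact (Real.rpow_pos_of_pos ((hπ.1 α).lt_of_ne' hα) q).ne'
    intro α hα
    rw [hE, hM α (Real.rpow_pos_of_pos hα q).ne']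
  · intro h α
    have hM : M = expUtil (R i) π := by
      rw [hMdef, sum_mul_eq_sum_mul_of_eq_on_support fun β hβ => h β (hsupp β hβ)]
      field_simp
    rcases eq_or_ne (π i α ^ q) 0 with hα | hα
    · rw [qGrad, hα, zero_mul]
    · rw [qGrad, ← hMdef, hM, h α (hsupp α hα), sub_self, mul_zero]

end qGrad

/-- for `q > 0`, the variational inequality
`⟨vᑫ(π*), π − π*⟩ ≤ 0` for all mixed profiles `π` holds iff every action in
the support of each `π*ᵢ` earns the same payoff as `π*` itself. -/
theorem qGrad_varIneq_iff_support_indifferent (q : ℝ) (hq : 0 < q)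
    (R : N → (∀ i, A i) → ℝ) (πs : ∀ i, A i → ℝ) (hπs : IsProfile πs) :
    (∀ π : ∀ i, A i → ℝ, IsProfile π →
        ∑ i, ∑ α, qGrad q R πs i α * (π i α - πs i α) ≤ 0) ↔
      (∀ i (α : A i), 0 < πs i α →
        expUtil (R i) (dev πs i (pureStrat α)) = expUtil (R i) πs) := by
  refine Iff.trans ?_ (forall_congr' fun i => qGrad_eq_zero_iff R hq (hπs i))
  constructor
  · intro h i
    refine eq_zero_of_le_sum_mul_of_sum_eq_zero (hπs i)
      (fun α => qGrad_eq_zero_of_eq_zero R hq) (sum_qGrad_eq_zero R (hπs i)) fun α => ?_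
    have hdev := h _ (isProfile_dev hπs i (isMixed_pureStrat α))
    rwa [sum_sum_mul_dev_sub, sum_mul_pureStrat_sub, sub_nonpos] at hdev
  · intro h π _
    simp [h]
end

section
/- For behavioural strategies in a repeated game with perfect monitoring and common recall l, and q > 0: if π* is a strict subgame perfect Nash equilibrium, then after every history each player plays a pure action, and the behavioural q-gradient v(π*) is the zero vector; consequently ⟨v(π*), π − π*⟩ ≤ 0 for all behavioural profiles π. -/
open Finset

attribute [local instance] Classical.propDecidable

section Behavioural

variable {N : Type*} [Fintype N] [DecidableEq N]
variable {A : N → Type*} [∀ i, Fintype (A i)] [∀ i, DecidableEq (A i)]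

/-- The last `n` elements of a list. -/
def lastN {α : Type*} (n : ℕ) (l : List α) : List α :=
  l.drop (l.length - n)

/-- Public histories with recall `l`: lists of at most `l` action profiles
(perfect monitoring). -/
abbrev Hist (A : N → Type*) (l : ℕ) := {L : List (∀ i, A i) // L.length ≤ l}

/-- Appending the action profile `a` to the history `h` and truncating to the
last `l` periods. -/
def nextHist {l : ℕ} (h : Hist A l) (a : ∀ i, A i) : Hist A l :=
  ⟨lastN l (h.1 ++ [a]), by simp [lastN]; omega⟩

/-- A behavioural strategy profile: each player maps each public history to
a distribution over own actions. -/
def IsBehProfile {l : ℕ} (π : ∀ i, Hist A l → A i → ℝ) : Prop :=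
  ∀ i h, IsMixed (π i h)

/-- Occupancy measure over histories: `occ π h0 t h` is the probability that
the (truncated) public history `t` periods after starting from `h0` is `h`. -/
noncomputable def occ {l : ℕ} (π : ∀ i, Hist A l → A i → ℝ) (h0 : Hist A l) :
    ℕ → Hist A l → ℝ
  | 0, h => if h = h0 then 1 else 0
  | t + 1, h => ∑' h' : Hist A l, ∑ a : ∀ i, A i,
      occ π h0 t h' * (∏ i, π i h' (a i)) * (if nextHist h' a = h then 1 else 0)

/-- The expected continuation utility `V_{i,h}(π)` of player `i` starting
from the public history `h0`, with continuation probability `δ`. -/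
noncomputable def Vbeh {l : ℕ} (δ : ℝ) (R : N → (∀ i, A i) → ℝ)
    (π : ∀ i, Hist A l → A i → ℝ) (i : N) (h0 : Hist A l) : ℝ :=
  ∑' t : ℕ, δ ^ t * ∑' h : Hist A l, ∑ a : ∀ j, A j,
    occ π h0 t h * (∏ j, π j h (a j)) * R i a

/-- Unilateral deviation of player `i` at the single history `h` to the
mixed action `p`. -/
def devAt {l : ℕ} (π : ∀ i, Hist A l → A i → ℝ) (i : N) (h : Hist A l)
    (p : A i → ℝ) : ∀ j, Hist A l → A j → ℝ :=
  Function.update π i (Function.update (π i) h p)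

/-- Strict subgame perfect Nash equilibrium: after every history, every
deviation of any player at that history to a different mixed action strictly
decreases that player's continuation utility. -/
def IsStrictSPNE {l : ℕ} (δ : ℝ) (R : N → (∀ i, A i) → ℝ)
    (π : ∀ i, Hist A l → A i → ℝ) : Prop :=
  IsBehProfile π ∧ ∀ i (h : Hist A l) (p : A i → ℝ), IsMixed p → p ≠ π i h →
    Vbeh δ R (devAt π i h p) i h < Vbeh δ R π i h

/-- The behavioural `q`-gradient component of player `i` at history `h` for
action `α` (with `0 ^ q = 0` for `q > 0`, via `Real.rpow`). -/
noncomputable def qGradBeh {l : ℕ} (q δ : ℝ) (R : N → (∀ i, A i) → ℝ)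
    (π : ∀ i, Hist A l → A i → ℝ) (i : N) (h : Hist A l) (α : A i) : ℝ :=
  (π i h α) ^ q *
    (Vbeh δ R (devAt π i h (pureStrat α)) i h -
      (∑ β, (π i h β) ^ q * Vbeh δ R (devAt π i h (pureStrat β)) i h) /
        (∑ β, (π i h β) ^ q))

section Aux
set_option linter.unusedSectionVars false
set_option maxHeartbeats 1000000

/-! ### Auxiliary infrastructure -/

noncomputable instance histFintype (l : ℕ) : Fintype (Hist A l) :=
  @Fintype.ofFinite _ ((List.finite_length_le _ l).to_subtype)

instance histInhabited (l : ℕ) : Inhabited (Hist A l) := ⟨⟨[], by simp⟩⟩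

variable {l : ℕ}

/-- One-step transition probability between histories. -/
noncomputable def transP (π : ∀ i, Hist A l → A i → ℝ) (h1 h2 : Hist A l) : ℝ :=
  ∑ a : ∀ i, A i, (∏ j, π j h1 (a j)) * (if nextHist h1 a = h2 then 1 else 0)

/-- Expected one-period reward of player `i`. -/
noncomputable def rewd (R : N → (∀ i, A i) → ℝ) (i : N)
    (π : ∀ i, Hist A l → A i → ℝ) (h1 : Hist A l) : ℝ :=
  ∑ a : ∀ j, A j, (∏ j, π j h1 (a j)) * R i a

lemma occ_zero (π : ∀ i, Hist A l → A i → ℝ) (h0 h : Hist A l) :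
    occ π h0 0 h = if h = h0 then 1 else 0 := rfl

lemma occ_succ (π : ∀ i, Hist A l → A i → ℝ) (h0 h : Hist A l) (t : ℕ) :
    occ π h0 (t + 1) h = ∑ h' : Hist A l, occ π h0 t h' * transP π h' h := by
  rw [occ, tsum_fintype]
  refine Finset.sum_congr rfl fun h' _ => ?_
  rw [transP, Finset.mul_sum]
  exact Finset.sum_congr rfl fun a _ => by ring

lemma occ_first (π : ∀ i, Hist A l → A i → ℝ) (h0 h : Hist A l) (t : ℕ) :
    occ π h0 (t + 1) h = ∑ h1 : Hist A l, transP π h0 h1 * occ π h1 t h := by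
  induction t generalizing h with
  | zero =>
    simp only [occ_succ, occ_zero]
    rw [Finset.sum_eq_single h0 (by intro b _ hb; simp [hb]) (by simp)]
    rw [Finset.sum_eq_single h (by intro b _ hb; simp [Ne.symm hb]) (by simp)]
    simp
  | succ t ih =>
    rw [occ_succ]
    simp only [ih, Finset.sum_mul]
    rw [Finset.sum_comm]
    refine Finset.sum_congr rfl fun h1 _ => ?_
    rw [occ_succ, Finset.mul_sum]
    exact Finset.sum_congr rfl fun h' _ => by ring

lemma transP_nonneg {π : ∀ i, Hist A l → A i → ℝ} (hπ : IsBehProfile π)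
    (h1 h2 : Hist A l) : 0 ≤ transP π h1 h2 := by
  refine Finset.sum_nonneg fun a _ =>
    mul_nonneg (Finset.prod_nonneg fun j _ => (hπ j h1).1 _) ?_
  positivity

lemma transP_row_sum {π : ∀ i, Hist A l → A i → ℝ} (hπ : IsBehProfile π)
    (h1 : Hist A l) : ∑ h2 : Hist A l, transP π h1 h2 = 1 := by
  unfold transP
  rw [Finset.sum_comm]
  have : ∀ a : ∀ i, A i, ∑ h2 : Hist A l,
      (∏ j, π j h1 (a j)) * (if nextHist h1 a = h2 then 1 else 0)
      = ∏ j, π j h1 (a j) := by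
    intro a
    rw [← Finset.mul_sum, Finset.sum_ite_eq (Finset.univ) (nextHist h1 a) (fun _ => (1:ℝ))]
    simp
  simp only [this]
  rw [← Fintype.prod_sum (f := fun j x => π j h1 x)]
  exact Finset.prod_eq_one fun j _ => (hπ j h1).2

lemma occ_nonneg {π : ∀ i, Hist A l → A i → ℝ} (hπ : IsBehProfile π)
    (h0 : Hist A l) (t : ℕ) (h : Hist A l) : 0 ≤ occ π h0 t h := by
  induction t generalizing h with
  | zero => rw [occ_zero]; positivity
  | succ t ih =>
    rw [occ_succ]
    exact Finset.sum_nonneg fun h' _ => mul_nonneg (ih h') (transP_nonneg hπ _ _)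

lemma occ_sum {π : ∀ i, Hist A l → A i → ℝ} (hπ : IsBehProfile π)
    (h0 : Hist A l) (t : ℕ) : ∑ h : Hist A l, occ π h0 t h = 1 := by
  induction t with
  | zero => simp [occ_zero]
  | succ t ih =>
    simp only [occ_succ]
    rw [Finset.sum_comm]
    calc ∑ h' : Hist A l, ∑ h : Hist A l, occ π h0 t h' * transP π h' h
        = ∑ h' : Hist A l, occ π h0 t h' := by
          refine Finset.sum_congr rfl fun h' _ => ?_
          rw [← Finset.mul_sum, transP_row_sum hπ, mul_one]
      _ = 1 := ih

lemma occ_le_one {π : ∀ i, Hist A l → A i → ℝ} (hπ : IsBehProfile π)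
    (h0 : Hist A l) (t : ℕ) (h : Hist A l) : occ π h0 t h ≤ 1 := by
  calc occ π h0 t h ≤ ∑ h' : Hist A l, occ π h0 t h' :=
        Finset.single_le_sum (fun h' _ => occ_nonneg hπ h0 t h') (Finset.mem_univ h)
    _ = 1 := occ_sum hπ h0 t

/-- The value of a history-dependent (bounded) reward `g`. -/
noncomputable def Wval (δ : ℝ) (π : ∀ i, Hist A l → A i → ℝ)
    (g : Hist A l → ℝ) (h0 : Hist A l) : ℝ :=
  ∑' t : ℕ, δ ^ t * ∑ h' : Hist A l, occ π h0 t h' * g h'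

lemma Wval_summable {δ : ℝ} (hδ0 : 0 ≤ δ) (hδ1 : δ < 1)
    {π : ∀ i, Hist A l → A i → ℝ} (hπ : IsBehProfile π)
    (g : Hist A l → ℝ) (h0 : Hist A l) :
    Summable fun t : ℕ => δ ^ t * ∑ h' : Hist A l, occ π h0 t h' * g h' := by
  refine Summable.of_abs ?_
  refine Summable.of_nonneg_of_le (fun t => abs_nonneg _) (fun t => ?_)
    ((summable_geometric_of_lt_one hδ0 hδ1).mul_left (∑ h' : Hist A l, |g h'|))
  rw [abs_mul, abs_pow, abs_of_nonneg hδ0, mul_comm]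
  refine mul_le_mul_of_nonneg_right ?_ (by positivity)
  calc |∑ h' : Hist A l, occ π h0 t h' * g h'|
      ≤ ∑ h' : Hist A l, |occ π h0 t h' * g h'| := Finset.abs_sum_le_sum_abs _ _
    _ ≤ ∑ h' : Hist A l, |g h'| := by
        refine Finset.sum_le_sum fun h' _ => ?_
        rw [abs_mul, abs_of_nonneg (occ_nonneg hπ _ _ _)]
        calc occ π h0 t h' * |g h'| ≤ 1 * |g h'| :=
              mul_le_mul_of_nonneg_right (occ_le_one hπ _ _ _) (abs_nonneg _)
          _ = |g h'| := one_mul _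

lemma Wval_bellman {δ : ℝ} (hδ0 : 0 ≤ δ) (hδ1 : δ < 1)
    {π : ∀ i, Hist A l → A i → ℝ} (hπ : IsBehProfile π)
    (g : Hist A l → ℝ) (h0 : Hist A l) :
    Wval δ π g h0 = g h0 + δ * ∑ h1 : Hist A l, transP π h0 h1 * Wval δ π g h1 := by
  rw [Wval, Summable.tsum_eq_zero_add (Wval_summable hδ0 hδ1 hπ g h0)]
  congr 1
  · simp [occ_zero, ite_mul]
  have key : ∀ t : ℕ, δ ^ (t+1) * ∑ h' : Hist A l, occ π h0 (t+1) h' * g h'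
      = ∑ h1 : Hist A l, transP π h0 h1 *
          (δ * (δ ^ t * ∑ h' : Hist A l, occ π h1 t h' * g h')) := by
    intro t
    simp only [occ_first, Finset.sum_mul, Finset.mul_sum]
    rw [Finset.sum_comm]
    exact Finset.sum_congr rfl fun h1 _ => Finset.sum_congr rfl fun h' _ => by ring
  rw [tsum_congr key]
  rw [Summable.tsum_finsetSum (fun h1 _ =>
    (((Wval_summable hδ0 hδ1 hπ g h1).mul_left δ).mul_left (transP π h0 h1)))]
  rw [Finset.mul_sum]
  refine Finset.sum_congr rfl fun h1 _ => ?_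
  rw [tsum_mul_left, tsum_mul_left, Wval]
  ring

lemma Vbeh_eq_Wval (δ : ℝ) (R : N → (∀ i, A i) → ℝ) (π : ∀ i, Hist A l → A i → ℝ)
    (i : N) (h0 : Hist A l) : Vbeh δ R π i h0 = Wval δ π (rewd R i π) h0 := by
  rw [Vbeh, Wval]
  refine tsum_congr fun t => ?_
  rw [tsum_fintype]
  congr 1
  refine Finset.sum_congr rfl fun h _ => ?_
  rw [rewd, Finset.mul_sum]
  exact Finset.sum_congr rfl fun a _ => by ring

/-- Uniqueness of the solution of the Bellman equation. -/
lemma bellman_unique {S : Type*} [Fintype S] [Inhabited S] {δ : ℝ}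
    (hδ0 : 0 ≤ δ) (hδ1 : δ < 1)
    (P : S → S → ℝ) (hP0 : ∀ h1 h2, 0 ≤ P h1 h2) (hP1 : ∀ h1, ∑ h2, P h1 h2 = 1)
    (g U U' : S → ℝ)
    (hU : ∀ h1, U h1 = g h1 + δ * ∑ h2, P h1 h2 * U h2)
    (hU' : ∀ h1, U' h1 = g h1 + δ * ∑ h2, P h1 h2 * U' h2) :
    U = U' := by
  set D : S → ℝ := fun h => |U h - U' h| with hD
  obtain ⟨hs, -, hmax⟩ := Finset.exists_max_image (univ : Finset S) D ⟨default, mem_univ _⟩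
  have hDle : ∀ h, D h ≤ D hs := fun h => hmax h (mem_univ h)
  have key : D hs ≤ δ * D hs := by
    have h1 : U hs - U' hs = δ * ∑ h2, P hs h2 * (U h2 - U' h2) := by
      calc U hs - U' hs
          = δ * ((∑ h2, P hs h2 * U h2) - ∑ h2, P hs h2 * U' h2) := by
            rw [hU hs, hU' hs]; ring
        _ = δ * ∑ h2, (P hs h2 * U h2 - P hs h2 * U' h2) := by
            rw [Finset.sum_sub_distrib]
        _ = δ * ∑ h2, P hs h2 * (U h2 - U' h2) :=
            congrArg _ (Finset.sum_congr rfl fun h2 _ => by ring)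
    calc D hs = |U hs - U' hs| := rfl
      _ = δ * |∑ h2, P hs h2 * (U h2 - U' h2)| := by
          rw [h1, abs_mul, abs_of_nonneg hδ0]
      _ ≤ δ * ∑ h2, P hs h2 * D hs := by
          refine mul_le_mul_of_nonneg_left ?_ hδ0
          calc |∑ h2, P hs h2 * (U h2 - U' h2)| ≤ ∑ h2, |P hs h2 * (U h2 - U' h2)| :=
                Finset.abs_sum_le_sum_abs _ _
            _ ≤ ∑ h2, P hs h2 * D hs := by
                refine Finset.sum_le_sum fun h2 _ => ?_
                rw [abs_mul, abs_of_nonneg (hP0 hs h2)]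
                exact mul_le_mul_of_nonneg_left ((hDle h2).trans_eq rfl) (hP0 hs h2)
      _ = δ * D hs := by rw [← Finset.sum_mul, hP1, one_mul]
  have hD0 : D hs ≤ 0 := by nlinarith [abs_nonneg (U hs - U' hs)]
  funext h
  have h2 : D h ≤ 0 := (hDle h).trans hD0
  have h3 : D h = 0 := le_antisymm h2 (abs_nonneg _)
  have := abs_eq_zero.mp h3
  linarith

/-! ### Deviation lemmas -/

lemma devAt_ne {π : ∀ i, Hist A l → A i → ℝ} {i j : N} (hji : j ≠ i)
    (h : Hist A l) (p : A i → ℝ) : devAt π i h p j = π j :=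
  Function.update_of_ne hji _ _

lemma devAt_i (π : ∀ i, Hist A l → A i → ℝ) (i : N) (h : Hist A l)
    (p : A i → ℝ) : devAt π i h p i = Function.update (π i) h p :=
  Function.update_self _ _ _

lemma devAt_at (π : ∀ i, Hist A l → A i → ℝ) (i : N) (h : Hist A l)
    (p : A i → ℝ) : devAt π i h p i h = p := by
  rw [devAt_i, Function.update_self]

lemma devAt_self (π : ∀ i, Hist A l → A i → ℝ) (i : N) (h : Hist A l) :
    devAt π i h (π i h) = π := by
  rw [devAt, Function.update_eq_self, Function.update_eq_self]

lemma devAt_apply_ne_h (π : ∀ i, Hist A l → A i → ℝ) (i : N) (h : Hist A l)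
    (p : A i → ℝ) (j : N) {h' : Hist A l} (hne : h' ≠ h) :
    devAt π i h p j h' = π j h' := by
  by_cases hj : j = i
  · subst hj; rw [devAt_i, Function.update_of_ne hne]
  · rw [devAt_ne hj]

lemma isBehProfile_devAt {π : ∀ i, Hist A l → A i → ℝ} (hπ : IsBehProfile π)
    {i : N} {h : Hist A l} {p : A i → ℝ} (hp : IsMixed p) :
    IsBehProfile (devAt π i h p) := by
  intro j h'
  by_cases hj : j = i
  · subst hj
    by_cases hh : h' = h
    · subst hh; rw [devAt_at]; exact hp
    · rw [devAt_apply_ne_h _ _ _ _ _ hh]; exact hπ _ _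
  · rw [devAt_ne hj]; exact hπ _ _

lemma transP_devAt_ne (π : ∀ i, Hist A l → A i → ℝ) (i : N) (h : Hist A l)
    (p : A i → ℝ) {h1 : Hist A l} (hne : h1 ≠ h) (h2 : Hist A l) :
    transP (devAt π i h p) h1 h2 = transP π h1 h2 := by
  unfold transP
  refine Finset.sum_congr rfl fun a _ => ?_
  congr 1
  exact Finset.prod_congr rfl fun j _ => by rw [devAt_apply_ne_h _ _ _ _ _ hne]

lemma rewd_devAt_ne (R : N → (∀ i, A i) → ℝ) (i' : N)
    (π : ∀ i, Hist A l → A i → ℝ) (i : N) (h : Hist A l)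
    (p : A i → ℝ) {h1 : Hist A l} (hne : h1 ≠ h) :
    rewd R i' (devAt π i h p) h1 = rewd R i' π h1 := by
  unfold rewd
  refine Finset.sum_congr rfl fun a _ => ?_
  congr 1
  exact Finset.prod_congr rfl fun j _ => by rw [devAt_apply_ne_h _ _ _ _ _ hne]

lemma prod_devAt_at (π : ∀ i, Hist A l → A i → ℝ) (i : N) (h : Hist A l)
    (p : A i → ℝ) (a : ∀ j, A j) :
    ∏ j, devAt π i h p j h (a j) = p (a i) * ∏ j ∈ {i}ᶜ, π j h (a j) := by
  rw [Fintype.prod_eq_mul_prod_compl i]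
  congr 1
  · rw [devAt_at]
  · refine Finset.prod_congr rfl fun j hj => ?_
    have : j ≠ i := by simpa using hj
    rw [devAt_ne this]

lemma transP_devAt_linear (π : ∀ i, Hist A l → A i → ℝ) (i : N) (h : Hist A l)
    (c d : ℝ) (p1 p2 : A i → ℝ) (h2 : Hist A l) :
    transP (devAt π i h (fun γ => c * p1 γ + d * p2 γ)) h h2
      = c * transP (devAt π i h p1) h h2 + d * transP (devAt π i h p2) h h2 := by
  unfold transP
  simp only [prod_devAt_at, Finset.mul_sum]
  rw [← Finset.sum_add_distrib]
  exact Finset.sum_congr rfl fun a _ => by ring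

lemma rewd_devAt_linear (R : N → (∀ i, A i) → ℝ) (i' : N)
    (π : ∀ i, Hist A l → A i → ℝ) (i : N) (h : Hist A l)
    (c d : ℝ) (p1 p2 : A i → ℝ) :
    rewd R i' (devAt π i h (fun γ => c * p1 γ + d * p2 γ)) h
      = c * rewd R i' (devAt π i h p1) h + d * rewd R i' (devAt π i h p2) h := by
  unfold rewd
  simp only [prod_devAt_at, Finset.mul_sum]
  rw [← Finset.sum_add_distrib]
  exact Finset.sum_congr rfl fun a _ => by ring


lemma strictSPNE_pure {δ : ℝ} (hδ0 : 0 < δ) (hδ1 : δ < 1) (R : N → (∀ i, A i) → ℝ)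
    {πs : ∀ i, Hist A l → A i → ℝ} (hπs : IsStrictSPNE δ R πs)
    (i : N) (h : Hist A l) : ∃ α : A i, πs i h α = 1 := by
  by_contra hno
  push_neg at hno
  have hbeh := hπs.1
  have hm : IsMixed (πs i h) := hbeh i h
  set m : A i → ℝ := πs i h with hmdef
  -- a strictly mixed action has two distinct actions in its support
  have hαex : ∃ α, 0 < m α := by
    by_contra hcon; push_neg at hcon
    have : ∑ γ, m γ = 0 := Finset.sum_eq_zero fun γ _ => le_antisymm (hcon γ) (hm.1 γ)
    rw [hm.2] at this; norm_num at this
  obtain ⟨α, hα⟩ := hαex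
  have hmα1 : m α < 1 := by
    refine lt_of_le_of_ne ?_ (hno α)
    calc m α ≤ ∑ γ, m γ := Finset.single_le_sum (fun γ _ => hm.1 γ) (mem_univ α)
      _ = 1 := hm.2
  have hβex : ∃ β, β ≠ α ∧ 0 < m β := by
    by_contra hcon; push_neg at hcon
    have h0 : ∀ β ∈ univ, β ≠ α → m β = 0 :=
      fun β _ hβα => le_antisymm (hcon β hβα) (hm.1 β)
    have : ∑ γ, m γ = m α := Finset.sum_eq_single α h0 (by simp)
    rw [hm.2] at this
    exact absurd this.symm (ne_of_lt hmα1)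
  obtain ⟨β, hβα, hβ⟩ := hβex
  -- the deviation direction and all data of the fractional-linear formula
  set d : A i → ℝ := fun γ => pureStrat α γ - pureStrat β γ with hd
  have hdα : d α = 1 := by
    rw [hd]; simp [pureStrat, Ne.symm hβα]
  have hdβ : d β = -1 := by
    rw [hd]; simp [pureStrat, hβα]
  have hd0 : ∀ γ, γ ≠ α → γ ≠ β → d γ = 0 := by
    intro γ h1 h2
    rw [hd]; simp [pureStrat, h1, h2]
  have hdsum : ∑ γ, d γ = 0 := by
    rw [hd]
    rw [Finset.sum_sub_distrib]
    simp [pureStrat, Finset.sum_ite_eq']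
  set x : Hist A l → ℝ := fun h' => Wval δ πs (rewd R i πs) h' with hxdef
  set y : Hist A l → ℝ :=
    fun h' => Wval δ πs (fun h'' => if h'' = h then 1 else 0) h' with hydef
  set w : Hist A l → ℝ := fun h2 => transP (devAt πs i h d) h h2 with hwdef
  set ρ : ℝ := rewd R i (devAt πs i h d) h with hρdef
  set c : ℝ := δ * ∑ h2, w h2 * y h2 with hcdef
  set K : ℝ := ρ + δ * ∑ h2, w h2 * x h2 with hKdef
  have hxB : ∀ h1, x h1 = rewd R i πs h1 + δ * ∑ h2, transP πs h1 h2 * x h2 :=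
    fun h1 => Wval_bellman hδ0.le hδ1 hbeh _ h1
  have hyB : ∀ h1, y h1 = (if h1 = h then 1 else 0) + δ * ∑ h2, transP πs h1 h2 * y h2 :=
    fun h1 => Wval_bellman hδ0.le hδ1 hbeh _ h1
  set ε : ℝ := min (min (m α) (m β)) (1 / (2 * (|c| + 1))) with hεdef
  have hεpos : 0 < ε := lt_min (lt_min hα hβ) (by positivity)
  have hεα : ε ≤ m α := (min_le_left _ _).trans (min_le_left _ _)
  have hεβ : ε ≤ m β := (min_le_left _ _).trans (min_le_right _ _)
  have hεc : ε * |c| ≤ 1/2 := by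
    have h1 : ε ≤ 1/(2*(|c|+1)) := min_le_right _ _
    have h2 : (0:ℝ) ≤ |c| := abs_nonneg c
    calc ε * |c| ≤ (1/(2*(|c|+1))) * |c| := mul_le_mul_of_nonneg_right h1 h2
      _ ≤ 1/2 := by
          rw [div_mul_eq_mul_div, div_le_div_iff₀ (by positivity) (by norm_num)]
          nlinarith
  have hden : ∀ t : ℝ, |t| ≤ ε → (0:ℝ) < 1 - t * c := by
    intro t ht
    have h1 : |t * c| ≤ 1/2 := by
      rw [abs_mul]
      calc |t| * |c| ≤ ε * |c| := mul_le_mul_of_nonneg_right ht (abs_nonneg c)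
        _ ≤ 1/2 := hεc
    have := abs_le.mp h1
    linarith
  have hmix : ∀ t : ℝ, |t| ≤ ε → IsMixed (fun γ => m γ + t * d γ) := by
    intro t ht
    have htabs := abs_le.mp ht
    constructor
    · intro γ
      show 0 ≤ m γ + t * d γ
      by_cases h1 : γ = α
      · subst h1; rw [hdα]; have := hm.1 γ; nlinarith [hεα, htabs.1, htabs.2]
      · by_cases h2 : γ = β
        · subst h2; rw [hdβ]; nlinarith [hεβ, htabs.1, htabs.2]
        · rw [hd0 γ h1 h2]; have := hm.1 γ; linarith
    · rw [Finset.sum_add_distrib, hm.2, ← Finset.mul_sum, hdsum]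
      ring
  -- the fractional-linear formula for the value of the deviation
  have claim : ∀ t : ℝ, |t| ≤ ε →
      Vbeh δ R (devAt πs i h (fun γ => m γ + t * d γ)) i h
        = x h + (t * K / (1 - t * c)) * y h := by
    intro t ht
    have hdent := hden t ht
    have hpmix := hmix t ht
    have hbt : IsBehProfile (devAt πs i h (fun γ => m γ + t * d γ)) :=
      isBehProfile_devAt hbeh hpmix
    set s : ℝ := t * K / (1 - t * c) with hsdef
    have hseq : s * (1 - t * c) = t * K := by
      rw [hsdef]; field_simp
    have hTlin : ∀ h2, transP (devAt πs i h (fun γ => m γ + t * d γ)) h h2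
        = transP πs h h2 + t * w h2 := by
      intro h2
      have h1 : (fun γ => m γ + t * d γ) = fun γ => 1 * m γ + t * d γ := by
        funext γ; ring
      rw [h1, transP_devAt_linear, devAt_self, one_mul, hwdef]
    have hglin : rewd R i (devAt πs i h (fun γ => m γ + t * d γ)) h
        = rewd R i πs h + t * ρ := by
      have h1 : (fun γ => m γ + t * d γ) = fun γ => 1 * m γ + t * d γ := by
        funext γ; ring
      rw [h1, rewd_devAt_linear, devAt_self, one_mul, hρdef]
    have hU : ∀ h1, x h1 + s * y h1
        = rewd R i (devAt πs i h (fun γ => m γ + t * d γ)) h1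
          + δ * ∑ h2, transP (devAt πs i h (fun γ => m γ + t * d γ)) h1 h2
              * (x h2 + s * y h2) := by
      intro h1
      by_cases hh1 : h1 = h
      · subst hh1
        have e : ∀ h2, transP (devAt πs i h1 (fun γ => m γ + t * d γ)) h1 h2
              * (x h2 + s * y h2)
            = transP πs h1 h2 * x h2 + s * (transP πs h1 h2 * y h2)
              + t * (w h2 * x h2) + t * s * (w h2 * y h2) := by
          intro h2; rw [hTlin h2]; ring
        rw [hglin, Finset.sum_congr rfl fun h2 _ => e h2]
        rw [Finset.sum_add_distrib, Finset.sum_add_distrib, Finset.sum_add_distrib,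
          ← Finset.mul_sum, ← Finset.mul_sum, ← Finset.mul_sum]
        have hyh := hyB h1
        rw [if_pos rfl] at hyh
        linear_combination hxB h1 + s * hyh + hseq + t * hKdef + t * s * hcdef
      · have e : ∀ h2, transP (devAt πs i h (fun γ => m γ + t * d γ)) h1 h2
              * (x h2 + s * y h2)
            = transP πs h1 h2 * x h2 + s * (transP πs h1 h2 * y h2) := by
          intro h2; rw [transP_devAt_ne πs i h _ hh1]; ring
        rw [rewd_devAt_ne R i πs i h _ hh1, Finset.sum_congr rfl fun h2 _ => e h2]
        rw [Finset.sum_add_distrib, ← Finset.mul_sum]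
        have hyh := hyB h1
        rw [if_neg hh1] at hyh
        linear_combination hxB h1 + s * hyh
    have hVB : ∀ h1, Wval δ (devAt πs i h (fun γ => m γ + t * d γ))
          (rewd R i (devAt πs i h (fun γ => m γ + t * d γ))) h1
        = rewd R i (devAt πs i h (fun γ => m γ + t * d γ)) h1
          + δ * ∑ h2, transP (devAt πs i h (fun γ => m γ + t * d γ)) h1 h2
              * Wval δ (devAt πs i h (fun γ => m γ + t * d γ))
                  (rewd R i (devAt πs i h (fun γ => m γ + t * d γ))) h2 :=
      fun h1 => Wval_bellman hδ0.le hδ1 hbt _ h1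
    have huniq := bellman_unique hδ0.le hδ1
      (transP (devAt πs i h (fun γ => m γ + t * d γ)))
      (transP_nonneg hbt) (transP_row_sum hbt)
      (rewd R i (devAt πs i h (fun γ => m γ + t * d γ)))
      (fun h' => x h' + s * y h')
      (fun h' => Wval δ (devAt πs i h (fun γ => m γ + t * d γ))
        (rewd R i (devAt πs i h (fun γ => m γ + t * d γ))) h')
      hU hVB
    have hfin := congrFun huniq h
    rw [Vbeh_eq_Wval]
    exact hfin.symm
  -- the contradiction
  have hVx : Vbeh δ R πs i h = x h := Vbeh_eq_Wval δ R πs i h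
  have hne : ∀ t : ℝ, t ≠ 0 → (fun γ => m γ + t * d γ) ≠ m := by
    intro t ht0 hcon
    have h1 := congrFun hcon α
    rw [hdα] at h1
    have : t = 0 := by linarith
    exact ht0 this
  have key : ∀ t : ℝ, |t| ≤ ε → t ≠ 0 → t * K * y h < 0 := by
    intro t ht ht0
    have hstrict := hπs.2 i h _ (hmix t ht) (hne t ht0)
    rw [claim t ht, hVx] at hstrict
    have h1 : (t * K / (1 - t * c)) * y h < 0 := by linarith
    rw [div_mul_eq_mul_div, div_neg_iff] at h1
    rcases h1 with ⟨_, hb⟩ | ⟨ha, _⟩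
    · exact absurd (hden t ht) (by linarith)
    · exact ha
  have h1 := key ε (le_of_eq (abs_of_pos hεpos)) (ne_of_gt hεpos)
  have h2 := key (-ε) (by rw [abs_neg, abs_of_pos hεpos]) (by intro hc; exact absurd hc (by linarith))
  nlinarith


end Aux

/-- for behavioural strategies with perfect monitoring and
common recall `l`, and `q > 0`: at a strict subgame perfect Nash equilibrium
`π*` each player plays a pure action after every history, the behavioural
`q`-gradient vanishes, and consequently `⟨v(π*), π − π*⟩ ≤ 0` for every
behavioural profile `π`. -/
theorem strictSPNE_qGradBeh (l : ℕ) (q δ : ℝ) (hq : 0 < q)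
    (hδ0 : 0 < δ) (hδ1 : δ < 1) (R : N → (∀ i, A i) → ℝ)
    (πs : ∀ i, Hist A l → A i → ℝ) (hπs : IsStrictSPNE δ R πs) :
    (∀ i (h : Hist A l), ∃ α : A i, πs i h α = 1) ∧
    (∀ i (h : Hist A l) (α : A i), qGradBeh q δ R πs i h α = 0) ∧
    (∀ π : ∀ i, Hist A l → A i → ℝ, IsBehProfile π →
      ∑ i, ∑' h : Hist A l, ∑ α,
        qGradBeh q δ R πs i h α * (π i h α - πs i h α) ≤ 0) := by
  have part1 : ∀ i (h : Hist A l), ∃ α : A i, πs i h α = 1 :=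
    fun i h => strictSPNE_pure hδ0 hδ1 R hπs i h
  have part2 : ∀ i (h : Hist A l) (α : A i), qGradBeh q δ R πs i h α = 0 := by
    intro i h α
    obtain ⟨α₀, hα₀⟩ := part1 i h
    have hm : IsMixed (πs i h) := hπs.1 i h
    have hzero : ∀ β, β ≠ α₀ → πs i h β = 0 := by
      intro β hβ
      have hadd := Finset.add_sum_erase univ (πs i h) (mem_univ α₀)
      rw [hα₀, hm.2] at hadd
      have hsum0 : ∑ γ ∈ univ.erase α₀, πs i h γ = 0 := by linarith
      exact (Finset.sum_eq_zero_iff_of_nonneg (fun γ _ => hm.1 γ)).mp hsum0 β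
        (Finset.mem_erase.mpr ⟨hβ, mem_univ β⟩)
    by_cases hα : α = α₀
    · subst hα
      rw [qGradBeh]
      have h1 : (πs i h α) ^ q = 1 := by rw [hα₀, Real.one_rpow]
      have hsum : ∑ β, (πs i h β) ^ q * Vbeh δ R (devAt πs i h (pureStrat β)) i h
          = Vbeh δ R (devAt πs i h (pureStrat α)) i h := by
        rw [Finset.sum_eq_single α
          (fun β _ hβ => by rw [hzero β hβ, Real.zero_rpow (ne_of_gt hq), zero_mul])
          (by simp)]
        rw [h1, one_mul]
      have hsq : ∑ β, (πs i h β) ^ q = 1 := by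
        rw [Finset.sum_eq_single α
          (fun β _ hβ => by rw [hzero β hβ, Real.zero_rpow (ne_of_gt hq)])
          (by simp)]
        exact h1
      rw [hsum, hsq, h1, div_one, sub_self, one_mul]
    · rw [qGradBeh, hzero α hα, Real.zero_rpow (ne_of_gt hq), zero_mul]
  refine ⟨part1, part2, ?_⟩
  intro π hπ
  have hz : ∀ i, (∑' h : Hist A l, ∑ α,
      qGradBeh q δ R πs i h α * (π i h α - πs i h α)) = 0 := by
    intro i
    have : ∀ h : Hist A l,
        (∑ α, qGradBeh q δ R πs i h α * (π i h α - πs i h α)) = 0 :=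
      fun h => Finset.sum_eq_zero fun α _ => by rw [part2 i h α, zero_mul]
    simp [this]
  rw [Finset.sum_congr rfl fun i _ => hz i]
  simp


end Behavioural
end
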